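/- arXiv:1708.04850 — 2 statements merged into one kernel-verified Lean document; each statement's English description precedes it below -/
import Mathlib

section
/- Let u,v ∈ V satisfy ⟨u,αᵢ∨⟩ ≥ 0 and ⟨v,αᵢ∨⟩ ≥ 0 for all i=1,…,n (i.e. u,v lie in the closed fundamental chamber). Then Π(u) ⊆ Π(v) if and only if v−u is a nonnegative real linear combination of the simple roots. Consequently, for dominant weights μ,λ ∈ P, Π^Q(μ) ⊆ Π^Q(λ) if and only if λ−μ is a nonnegative integer combination of the simple roots. -/
open RealInnerProductSpace Pointwise

noncomputable section

variable {V : Type*} [NormedAddCommGroup V] [InnerProductSpace ℝ V]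

/-- The coroot `α∨ = 2α/⟨α,α⟩` associated to a vector `α`. -/
def coroot (α : V) : V := (2 / ⟪α, α⟫) • α

/-- The reflection `s_α(v) = v − ⟨v,α∨⟩α` across the hyperplane orthogonal to `α`. -/
def sRefl (α : V) (v : V) : V := v - ⟪v, coroot α⟫ • α

/-- An irreducible reduced crystallographic root system in the real inner product
space `V`, together with a chosen set of positive roots and simple roots. -/
structure RootSystemData (V : Type*) [NormedAddCommGroup V] [InnerProductSpace ℝ V] where
  n : ℕ
  roots : Set V
  roots_finite : roots.Finite
  roots_nonzero : (0 : V) ∉ roots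
  roots_span : Submodule.span ℝ roots = ⊤
  refl_mem : ∀ α ∈ roots, ∀ β ∈ roots, sRefl α β ∈ roots
  reduced : ∀ α ∈ roots, ∀ c : ℝ, c • α ∈ roots → c • α = α ∨ c • α = -α
  crystallographic : ∀ α ∈ roots, ∀ β ∈ roots, ∃ m : ℤ, ⟪β, coroot α⟫ = (m : ℝ)
  pos : Set V
  pos_subset : pos ⊆ roots
  pos_union : roots = pos ∪ (-pos)
  simple : Fin n → V
  simple_mem : ∀ i, simple i ∈ pos
  simple_li : LinearIndependent ℝ simple
  simple_span : Submodule.span ℝ (Set.range simple) = ⊤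
  pos_combo : ∀ α ∈ pos, ∃ c : Fin n → ℕ, α = ∑ i, (c i : ℝ) • simple i
  irred : ∀ S₁ S₂ : Set V, roots = S₁ ∪ S₂ →
    (∀ α ∈ S₁, ∀ β ∈ S₂, ⟪α, β⟫ = 0) → S₁ = ∅ ∨ S₂ = ∅

namespace RootSystemData

variable (R : RootSystemData V)

/-- The Weyl group `W`: all finite compositions of reflections in roots. -/
def weyl : Set (V → V) :=
  {w | ∃ l : List V, (∀ α ∈ l, α ∈ R.roots) ∧ w = (l.map sRefl).foldr (· ∘ ·) id}

/-- The orbit `W(v)` of a vector under the Weyl group. -/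
def orbit (v : V) : Set V := {u | ∃ w ∈ R.weyl, u = w v}

/-- The weight lattice `P`. -/
def weightLattice : Set V :=
  {v | ∀ α ∈ R.roots, ∃ m : ℤ, ⟪v, coroot α⟫ = (m : ℝ)}

/-- The permutohedron `Π(v) = ConvexHull W(v)`. -/
def perm (v : V) : Set V := convexHull ℝ (R.orbit v)

/-- The discrete permutohedron `Π^Q(λ) = Π(λ) ∩ (Q+λ)`. -/
def permQ (lam : V) : Set V :=
  R.perm lam ∩ {v | v - lam ∈ Submodule.span ℤ R.roots}

/-- Dominance: nonnegative pairing with all simple coroots. -/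
def IsDominant (v : V) : Prop := ∀ i, 0 ≤ ⟪v, coroot (R.simple i)⟫

/-- `W`-invariance of a function `𝐤 : Φ → ℕ`. -/
def IsWInvariant (k : V → ℕ) : Prop := ∀ w ∈ R.weyl, ∀ α ∈ R.roots, k (w α) = k α

/-- Symmetric interval-firing: `λ → λ+α` for `α ∈ Φ⁺` whenever
`⟨λ,α∨⟩+1 ∈ {−𝐤(α),…,𝐤(α)}`. -/
def symFire (k : V → ℕ) (lam mu : V) : Prop :=
  lam ∈ R.weightLattice ∧ ∃ α ∈ R.pos, mu = lam + α ∧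
    -(k α : ℝ) ≤ ⟪lam, coroot α⟫ + 1 ∧ ⟪lam, coroot α⟫ + 1 ≤ (k α : ℝ)

/-- Truncated interval-firing: `λ → λ+α` for `α ∈ Φ⁺` whenever
`⟨λ,α∨⟩+1 ∈ {−𝐤(α)+1,…,𝐤(α)}`. -/
def trFire (k : V → ℕ) (lam mu : V) : Prop :=
  lam ∈ R.weightLattice ∧ ∃ α ∈ R.pos, mu = lam + α ∧
    -(k α : ℝ) + 1 ≤ ⟪lam, coroot α⟫ + 1 ∧ ⟪lam, coroot α⟫ + 1 ≤ (k α : ℝ)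

/-- All roots have the same length. -/
def SimplyLaced : Prop := ∀ α ∈ R.roots, ∀ β ∈ R.roots, ‖α‖ = ‖β‖

/-- A root of maximal length. -/
def IsLongRoot (α : V) : Prop := α ∈ R.roots ∧ ∀ β ∈ R.roots, ‖β‖ ≤ ‖α‖

/-- A root which is not of maximal length. -/
def IsShortRoot (α : V) : Prop := α ∈ R.roots ∧ ¬ R.IsLongRoot α

/-- `𝐤` is good: either `Φ` is simply laced, or `𝐤` vanishing on short roots
implies `𝐤` vanishing on all (in particular long) roots. -/
def IsGood (k : V → ℕ) : Prop :=
  R.SimplyLaced ∨ ((∀ α, R.IsShortRoot α → k α = 0) → ∀ β ∈ R.roots, k β = 0)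

/-- The product of the simple reflections indexed by a word. -/
def wordProd (l : List (Fin R.n)) : V → V :=
  (l.map (fun i => sRefl (R.simple i))).foldr (· ∘ ·) id

/-- Coxeter length: the minimal length of a word in the simple reflections
expressing `w`. -/
def coxLen (w : V → V) : ℕ :=
  sInf {m : ℕ | ∃ l : List (Fin R.n), l.length = m ∧ w = R.wordProd l}

/-- The parabolic subgroup `W_I`: all compositions of simple reflections `s_{αᵢ}`, `i ∈ I`. -/
def weylI (I : Set (Fin R.n)) : Set (V → V) :=
  {w | ∃ l : List (Fin R.n), (∀ i ∈ l, i ∈ I) ∧ w = R.wordProd l}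

/-- The orbit `W_I(v)`. -/
def orbitI (I : Set (Fin R.n)) (v : V) : Set V := {u | ∃ w ∈ R.weylI I, u = w v}

/-- The discrete parabolic permutohedron `Π^Q_I(λ)`. -/
def permQI (I : Set (Fin R.n)) (lam : V) : Set V :=
  convexHull ℝ (R.orbitI I lam) ∩ {v | v - lam ∈ Submodule.span ℤ R.roots}

/-- Given a choice `dm` of dominant representatives, `I^{0,1}_λ` is the set of
indices `i` with `⟨λ_dom, αᵢ∨⟩ ∈ {0,1}`. -/
def I01 (dm : V → V) (lam : V) : Set (Fin R.n) :=
  {i | ⟪dm lam, coroot (R.simple i)⟫ = 0 ∨ ⟪dm lam, coroot (R.simple i)⟫ = 1}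

/-- The minimal length of an `α`-traverse in `Π^Q(λ)`. -/
def traverseLen (lam α : V) : ℕ :=
  sInf {ℓ : ℕ | ∃ mu : V, (∀ i : ℕ, i ≤ ℓ → mu - (i : ℝ) • α ∈ R.permQ lam) ∧
    mu + α ∉ R.permQ lam ∧ mu - ((ℓ : ℝ) + 1) • α ∉ R.permQ lam}

/-- `m_λ(α) = min {cᵢ : αᵢ ∈ W(α)}` where `λ = Σ cᵢ ωᵢ` is dominant,
i.e. `cᵢ = ⟨λ, αᵢ∨⟩`. -/
def mVal (lam α : V) : ℕ :=
  sInf {c : ℕ | ∃ i, R.simple i ∈ R.orbit α ∧ (c : ℝ) = ⟪lam, coroot (R.simple i)⟫}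

/-- Funny weights (only exist when `Φ` is not simply laced). -/
def IsFunny (lam : V) : Prop :=
  ¬ R.SimplyLaced ∧ ∃ l s : Fin R.n, R.IsLongRoot (R.simple l) ∧ R.IsShortRoot (R.simple s) ∧
    ⟪R.simple l, coroot (R.simple s)⟫ ≠ 0 ∧
    ⟪lam, coroot (R.simple s)⟫ = 0 ∧ 1 ≤ ⟪lam, coroot (R.simple l)⟫ ∧
    ∀ i, R.IsLongRoot (R.simple i) → ⟪lam, coroot (R.simple l)⟫ ≤ ⟪lam, coroot (R.simple i)⟫

end RootSystemData

/-- The map `η_𝐤(λ) = λ + w_λ(ρ_𝐤)`, relative to a choice `fw` of fundamental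
weights and a choice `wl` of minimal-length Weyl elements `λ ↦ w_λ`. -/
def etaMap (R : RootSystemData V) (fw : Fin R.n → V) (wl : V → V → V)
    (k : V → ℕ) (lam : V) : V :=
  lam + wl lam (∑ i, (k (R.simple i) : ℝ) • fw i)

/-- Two points are in the same connected component of a relation if they are
related by its reflexive-transitive-symmetric closure. -/
def SameComponent (r : V → V → Prop) (x y : V) : Prop :=
  Relation.ReflTransGen (fun a b => r a b ∨ r b a) x y

/-!
For dominant `u` and `w ∈ W`, the vector `u - w u` lies in the cone `Q⁺_ℝ` spanned by the simple
roots. Write `w` as a word in simple reflections and induct on its length: if the last letter `sᵢ`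
sends `αᵢ` under the remaining word `w'` to a positive root, then
`u - w' sᵢ u = (u - w' u) + ⟨u, αᵢ∨⟩ w' αᵢ`; otherwise the exchange argument yields a shorter
word for `w' sᵢ`. By convexity `Π(v) ⊆ v - Q⁺_ℝ`, which is one direction.

Conversely, let `v - u ∈ Q⁺_ℝ` with `u` dominant. If `u ∉ Π(v)`, a separating vector moved into
the dominant chamber by some `g ∈ W` pairs with `u` at least as much as with `g u` and at most as
much as with `v`, contradicting separation; so `u ∈ Π(v)`, and `W`-invariance of `Π(v)` gives
`Π(u) ⊆ Π(v)`. The discrete statement follows because `Q` is the integer span of the simple roots.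
-/

section Reflection

variable {α : V}

lemma coroot_neg (α : V) : coroot (-α) = -coroot α := by
  simp [coroot]

lemma sRefl_neg (α : V) : sRefl (-α) = sRefl α := by
  funext v
  simp [sRefl, coroot_neg]

lemma inner_coroot (v α : V) : ⟪v, coroot α⟫ = 2 / ⟪α, α⟫ * ⟪v, α⟫ :=
  real_inner_smul_right _ _ _

lemma inner_coroot_nonneg_iff {v : V} (hα : α ≠ 0) : 0 ≤ ⟪v, coroot α⟫ ↔ 0 ≤ ⟪v, α⟫ := by
  rw [inner_coroot]
  exact mul_nonneg_iff_of_pos_left (div_pos two_pos (real_inner_self_pos.2 hα))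

lemma inner_coroot_pos_iff {v : V} (hα : α ≠ 0) : 0 < ⟪v, coroot α⟫ ↔ 0 < ⟪v, α⟫ := by
  rw [inner_coroot]
  exact mul_pos_iff_of_pos_left (div_pos two_pos (real_inner_self_pos.2 hα))

lemma inner_self_coroot (hα : α ≠ 0) : ⟪α, coroot α⟫ = 2 := by
  rw [inner_coroot, div_mul_cancel₀ _ (real_inner_self_pos.2 hα).ne']

lemma sRefl_sRefl (α v : V) : sRefl α (sRefl α v) = v := by
  rcases eq_or_ne α 0 with rfl | hα
  · simp [sRefl, coroot]
  · simp only [sRefl, inner_sub_left, real_inner_smul_left, inner_self_coroot hα]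
    module

lemma inner_sRefl_sRefl (α x y : V) : ⟪sRefl α x, sRefl α y⟫ = ⟪x, y⟫ := by
  rcases eq_or_ne α 0 with rfl | hα
  · simp [sRefl, coroot]
  · have := (real_inner_self_pos.2 hα).ne'
    simp only [sRefl, inner_sub_left, inner_sub_right, real_inner_smul_left,
      real_inner_smul_right, inner_coroot, real_inner_comm α]
    field_simp
    ring

def sReflₗᵢ (α : V) : V →ₗᵢ[ℝ] V :=
  LinearMap.isometryOfInner
    { toFun := sRefl α
      map_add' := fun x y => by simp only [sRefl, inner_add_left, add_smul]; abel
      map_smul' := fun c x => by simp [sRefl, real_inner_smul_left, smul_sub, smul_smul] }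
    (inner_sRefl_sRefl α)

lemma sRefl_map (f : V →ₗᵢ[ℝ] V) (α v : V) : sRefl (f α) (f v) = f (sRefl α v) := by
  simp only [sRefl, coroot, real_inner_smul_right, LinearIsometry.inner_map_map, map_sub, map_smul]

end Reflection

namespace RootSystemData

variable (R : RootSystemData V)

section Weyl

variable {R} {w w' : V → V}

lemma id_mem_weyl : id ∈ R.weyl := ⟨[], by simp, rfl⟩

lemma sRefl_comp_mem_weyl {α : V} (hα : α ∈ R.roots) (hw : w ∈ R.weyl) :
    sRefl α ∘ w ∈ R.weyl := by
  obtain ⟨l, hl, rfl⟩ := hw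
  exact ⟨α :: l, by simpa [hα] using hl, rfl⟩

lemma sRefl_mem_weyl {α : V} (hα : α ∈ R.roots) : sRefl α ∈ R.weyl :=
  sRefl_comp_mem_weyl hα id_mem_weyl

@[elab_as_elim]
lemma weyl_induction {P : (V → V) → Prop} (hw : w ∈ R.weyl) (h_id : P id)
    (h_comp : ∀ α ∈ R.roots, ∀ w, P w → P (sRefl α ∘ w)) : P w := by
  obtain ⟨l, hl, rfl⟩ := hw
  induction l with
  | nil => exact h_id
  | cons α l ih =>
    exact h_comp α (hl α (by simp)) _ (ih fun β hβ => hl β (by simp [hβ]))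

lemma comp_mem_weyl (hw : w ∈ R.weyl) (hw' : w' ∈ R.weyl) : w ∘ w' ∈ R.weyl :=
  weyl_induction (P := fun w => w ∘ w' ∈ R.weyl) hw hw' fun _ hα _ ih => sRefl_comp_mem_weyl hα ih

lemma exists_linearIsometry_of_mem_weyl (hw : w ∈ R.weyl) : ∃ f : V →ₗᵢ[ℝ] V, ⇑f = w := by
  refine weyl_induction hw ⟨LinearIsometry.id, rfl⟩ fun α _ w ih => ?_
  obtain ⟨f, rfl⟩ := ih
  exact ⟨(sReflₗᵢ α).comp f, rfl⟩

lemma map_mem_roots_of_mem_weyl (hw : w ∈ R.weyl) {β : V} (hβ : β ∈ R.roots) :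
    w β ∈ R.roots :=
  weyl_induction (P := fun w => w β ∈ R.roots) hw hβ fun α hα _ ih => R.refl_mem α hα _ ih

lemma exists_rightInverse_of_mem_weyl (hw : w ∈ R.weyl) :
    ∃ w' ∈ R.weyl, ∀ x, w (w' x) = x := by
  refine weyl_induction hw ⟨id, id_mem_weyl, fun _ => rfl⟩ fun α hα w ih => ?_
  obtain ⟨w', hw', hww'⟩ := ih
  exact ⟨w' ∘ sRefl α, comp_mem_weyl hw' (sRefl_mem_weyl hα),
    fun x => by simp [hww', sRefl_sRefl]⟩

lemma sRefl_comp_of_mem_weyl (hw : w ∈ R.weyl) (α : V) : sRefl (w α) ∘ w = w ∘ sRefl α := by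
  obtain ⟨f, rfl⟩ := exists_linearIsometry_of_mem_weyl hw
  exact funext (sRefl_map f α)

variable (R)

lemma weyl_finite : R.weyl.Finite := by
  classical
  let restrict (w : V → V) (β : R.roots) : R.roots :=
    if hw : w ∈ R.weyl then ⟨w β, map_mem_roots_of_mem_weyl hw β.2⟩ else β
  have : Finite R.roots := R.roots_finite
  refine Set.Finite.of_finite_image (Set.toFinite (restrict '' R.weyl)) fun w₁ h₁ w₂ h₂ h => ?_
  obtain ⟨f₁, rfl⟩ := exists_linearIsometry_of_mem_weyl h₁
  obtain ⟨f₂, rfl⟩ := exists_linearIsometry_of_mem_weyl h₂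
  have : f₁.toLinearMap = f₂.toLinearMap := LinearMap.ext_on R.roots_span fun β hβ => by
    have hβ' := congrArg Subtype.val (congrFun h ⟨β, hβ⟩)
    simp only [restrict, dif_pos h₁, dif_pos h₂] at hβ'
    exact hβ'
  exact congrArg (fun g : V →ₗ[ℝ] V => ⇑g) this

lemma orbit_finite (v : V) : (R.orbit v).Finite := by
  refine ((R.weyl_finite).image fun w => w v).subset ?_
  rintro _ ⟨w, hw, rfl⟩
  exact ⟨w, hw, rfl⟩

lemma mem_orbit_self (v : V) : v ∈ R.orbit v := ⟨id, id_mem_weyl, rfl⟩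

variable {R}

lemma map_mem_orbit (hw : w ∈ R.weyl) {v x : V} (hx : x ∈ R.orbit v) : w x ∈ R.orbit v := by
  obtain ⟨w', hw', rfl⟩ := hx
  exact ⟨w ∘ w', comp_mem_weyl hw hw', rfl⟩

end Weyl

section Cone

variable {x y β : V}

def basis : Module.Basis (Fin R.n) ℝ V := Module.Basis.mk R.simple_li R.simple_span.ge

@[simp] lemma basis_apply (i : Fin R.n) : R.basis i = R.simple i := Module.Basis.mk_apply _ _ _

@[simp] lemma repr_simple (i : Fin R.n) : R.basis.repr (R.simple i) = Finsupp.single i 1 := by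
  rw [← basis_apply, Module.Basis.repr_self]

lemma sum_repr_smul_simple (x : V) : ∑ j, R.basis.repr x j • R.simple j = x := by
  simpa using R.basis.sum_repr x

lemma repr_sum_smul_simple (c : Fin R.n → ℝ) (j : Fin R.n) :
    R.basis.repr (∑ i, c i • R.simple i) j = c j := by
  simp [Finsupp.single_apply]

lemma simple_mem_roots (i : Fin R.n) : R.simple i ∈ R.roots := R.pos_subset (R.simple_mem i)

lemma ne_zero_of_mem_roots (hβ : β ∈ R.roots) : β ≠ 0 := fun h => R.roots_nonzero (h ▸ hβ)

lemma simple_ne_zero (i : Fin R.n) : R.simple i ≠ 0 := R.ne_zero_of_mem_roots (R.simple_mem_roots i)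

lemma mem_pos_or_neg_mem_pos (hβ : β ∈ R.roots) : β ∈ R.pos ∨ -β ∈ R.pos := by
  rw [R.pos_union] at hβ
  exact hβ

/-- The closed cone `Q⁺_ℝ` spanned by the simple roots. -/
def posCone : Set V := {x | ∀ j, 0 ≤ R.basis.repr x j}

lemma mem_posCone_iff :
    x ∈ R.posCone ↔ ∃ c : Fin R.n → ℝ, (∀ i, 0 ≤ c i) ∧ x = ∑ i, c i • R.simple i := by
  refine ⟨fun hx => ⟨_, hx, (R.sum_repr_smul_simple x).symm⟩, ?_⟩
  rintro ⟨c, hc, rfl⟩ j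
  rw [repr_sum_smul_simple]
  exact hc j

lemma add_mem_posCone (hx : x ∈ R.posCone) (hy : y ∈ R.posCone) : x + y ∈ R.posCone :=
  fun j => by simpa using add_nonneg (hx j) (hy j)

lemma smul_mem_posCone {c : ℝ} (hc : 0 ≤ c) (hx : x ∈ R.posCone) : c • x ∈ R.posCone :=
  fun j => by simpa using mul_nonneg hc (hx j)

lemma pos_subset_posCone : R.pos ⊆ R.posCone := by
  intro β hβ
  obtain ⟨c, rfl⟩ := R.pos_combo β hβ
  exact R.mem_posCone_iff.2 ⟨_, fun i => Nat.cast_nonneg (c i), rfl⟩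

lemma eq_zero_of_mem_posCone_of_neg_mem (hx : x ∈ R.posCone) (hx' : -x ∈ R.posCone) : x = 0 :=
  R.basis.repr.injective <| Finsupp.ext fun j => by
    have := hx' j
    simp only [map_neg, Finsupp.coe_neg, Pi.neg_apply] at this
    simpa using le_antisymm (by linarith) (hx j)

lemma neg_notMem_pos (hβ : β ∈ R.pos) : -β ∉ R.pos := fun hβ' =>
  R.ne_zero_of_mem_roots (R.pos_subset hβ)
    (R.eq_zero_of_mem_posCone_of_neg_mem (R.pos_subset_posCone hβ) (R.pos_subset_posCone hβ'))

lemma inner_nonneg_of_mem_posCone (hy : ∀ i, 0 ≤ ⟪y, R.simple i⟫) (hx : x ∈ R.posCone) :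
    0 ≤ ⟪y, x⟫ := by
  rw [← R.sum_repr_smul_simple x, inner_sum]
  exact Finset.sum_nonneg fun j _ => by
    rw [real_inner_smul_right]
    exact mul_nonneg (hx j) (hy j)

omit R in
lemma IsDominant.inner_nonneg {R : RootSystemData V} (hy : R.IsDominant y)
    (hx : x ∈ R.posCone) : 0 ≤ ⟪y, x⟫ :=
  R.inner_nonneg_of_mem_posCone
    (fun i => (inner_coroot_nonneg_iff (R.simple_ne_zero i)).1 (hy i)) hx

lemma exists_inner_simple_pos (hβ : β ∈ R.pos) : ∃ j, 0 < ⟪β, R.simple j⟫ := by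
  by_contra! h
  have := R.inner_nonneg_of_mem_posCone (y := -β) (fun i => by simpa using h i)
    (R.pos_subset_posCone hβ)
  rw [inner_neg_left, neg_nonneg] at this
  exact R.ne_zero_of_mem_roots (R.pos_subset hβ) (real_inner_self_nonpos.1 this)

lemma sRefl_simple_mem_pos (i : Fin R.n) (hβ : β ∈ R.pos) (hne : β ≠ R.simple i) :
    sRefl (R.simple i) β ∈ R.pos := by
  have hroot := R.refl_mem _ (R.simple_mem_roots i) _ (R.pos_subset hβ)
  refine (R.mem_pos_or_neg_mem_pos hroot).resolve_right fun hneg => ?_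
  have hrepr : ∀ j ≠ i, R.basis.repr β j = 0 := fun j hj => by
    have := R.pos_subset_posCone hneg j
    simp [sRefl, hj.symm] at this
    exact le_antisymm this (R.pos_subset_posCone hβ j)
  have hβi : R.basis.repr β i • R.simple i = β := by
    conv_rhs => rw [← R.sum_repr_smul_simple β]
    rw [Finset.sum_eq_single i (fun j _ hj => by rw [hrepr j hj, zero_smul])
      (fun h => absurd (Finset.mem_univ i) h)]
  rcases R.reduced _ (R.simple_mem_roots i) _ (hβi ▸ R.pos_subset hβ) with h | h <;> rw [hβi] at h
  · exact hne h
  · exact R.neg_notMem_pos (R.simple_mem i) (h ▸ hβ)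

def height : V →ₗ[ℝ] ℝ := ∑ j, R.basis.coord j

lemma height_sRefl_simple (i : Fin R.n) (x : V) :
    R.height (sRefl (R.simple i) x) = R.height x - ⟪x, coroot (R.simple i)⟫ := by
  simp [height, sRefl, Finsupp.single_apply]

end Cone

section Words

variable {R} {u : V}

lemma wordProd_cons (i : Fin R.n) (l : List (Fin R.n)) :
    R.wordProd (i :: l) = sRefl (R.simple i) ∘ R.wordProd l := rfl

lemma wordProd_singleton (i : Fin R.n) : R.wordProd [i] = sRefl (R.simple i) := rfl

lemma wordProd_append (l l' : List (Fin R.n)) :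
    R.wordProd (l ++ l') = R.wordProd l ∘ R.wordProd l' := by
  induction l with
  | nil => rfl
  | cons i l ih => rw [List.cons_append, wordProd_cons, wordProd_cons, ih]; rfl

lemma wordProd_mem_weyl (l : List (Fin R.n)) : R.wordProd l ∈ R.weyl := by
  induction l with
  | nil => exact id_mem_weyl
  | cons i l ih => exact sRefl_comp_mem_weyl (R.simple_mem_roots i) ih

/-- Conjugating by a simple reflection `sⱼ` with `⟨β, αⱼ⟩ > 0` turns `s_β` into the reflection
in a positive root of smaller height. -/
lemma exists_wordProd_eq_sRefl {β : V} (hβ : β ∈ R.pos) : ∃ l, R.wordProd l = sRefl β := by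
  by_contra hβS
  obtain ⟨β, ⟨hβ, hβl⟩, hmin⟩ := Set.exists_min_image
    {β ∈ R.pos | ¬ ∃ l, R.wordProd l = sRefl β} R.height
    (R.roots_finite.subset fun β h => R.pos_subset h.1) ⟨β, hβ, hβS⟩
  obtain ⟨j, hj⟩ := R.exists_inner_simple_pos hβ
  have hne : β ≠ R.simple j := fun h => hβl ⟨[j], h ▸ rfl⟩
  have hγ := R.sRefl_simple_mem_pos j hβ hne
  obtain ⟨l, hl⟩ : ∃ l, R.wordProd l = sRefl (sRefl (R.simple j) β) := by
    by_contra h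
    refine (hmin _ ⟨hγ, h⟩).not_gt ?_
    rw [R.height_sRefl_simple]
    linarith [(inner_coroot_pos_iff (R.simple_ne_zero j)).2 hj]
  have hconj := sRefl_comp_of_mem_weyl (sRefl_mem_weyl (R.simple_mem_roots j))
    (sRefl (R.simple j) β)
  rw [sRefl_sRefl] at hconj
  refine hβl ⟨j :: (l ++ [j]), ?_⟩
  rw [wordProd_cons, wordProd_append, hl, wordProd_singleton, ← Function.comp_assoc, ← hconj]
  funext x
  simp [sRefl_sRefl]

lemma exists_wordProd_eq {w : V → V} (hw : w ∈ R.weyl) : ∃ l, R.wordProd l = w := by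
  refine weyl_induction hw ⟨[], rfl⟩ fun α hα w ⟨l, hl⟩ => ?_
  obtain ⟨l', hl'⟩ : ∃ l', R.wordProd l' = sRefl α := by
    rcases R.mem_pos_or_neg_mem_pos hα with h | h
    · exact exists_wordProd_eq_sRefl h
    · simpa [sRefl_neg] using exists_wordProd_eq_sRefl h
  exact ⟨l' ++ l, by rw [wordProd_append, hl, hl']⟩

lemma exists_suffix_wordProd_eq_simple {β : V} (hβ : β ∈ R.pos) :
    ∀ l : List (Fin R.n), -R.wordProd l β ∈ R.pos →
      ∃ l₁ j l₂, l = l₁ ++ j :: l₂ ∧ R.wordProd l₂ β = R.simple j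
  | [], h => absurd h (R.neg_notMem_pos hβ)
  | j :: l, h => by
    rcases R.mem_pos_or_neg_mem_pos
      (map_mem_roots_of_mem_weyl (wordProd_mem_weyl l) (R.pos_subset hβ)) with hl | hl
    · refine ⟨[], j, l, rfl, ?_⟩
      by_contra hne
      exact R.neg_notMem_pos (R.sRefl_simple_mem_pos j hl hne) h
    · obtain ⟨l₁, j', l₂, rfl, h'⟩ := exists_suffix_wordProd_eq_simple hβ l hl
      exact ⟨j :: l₁, j', l₂, rfl, h'⟩

lemma exists_shorter_wordProd_eq {l : List (Fin R.n)} {i : Fin R.n}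
    (h : -R.wordProd l (R.simple i) ∈ R.pos) :
    ∃ l', l'.length < l.length ∧ R.wordProd l' = R.wordProd (l ++ [i]) := by
  obtain ⟨l₁, j, l₂, rfl, hj⟩ := exists_suffix_wordProd_eq_simple (R.simple_mem i) l h
  refine ⟨l₁ ++ l₂, by simp, ?_⟩
  have hconj := sRefl_comp_of_mem_weyl (wordProd_mem_weyl l₂) (R.simple i)
  rw [hj] at hconj
  rw [List.append_assoc, List.cons_append, wordProd_append, wordProd_append, wordProd_cons,
    wordProd_append, wordProd_singleton, ← Function.comp_assoc (sRefl (R.simple j)), hconj]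
  funext x
  simp [sRefl_sRefl]

theorem sub_wordProd_mem_posCone (hu : R.IsDominant u) (l : List (Fin R.n)) :
    u - R.wordProd l u ∈ R.posCone := by
  induction hl : l.length using Nat.strong_induction_on generalizing l with
  | _ m ih =>
    rcases l.eq_nil_or_concat with rfl | ⟨l, i, rfl⟩
    · simp [wordProd, posCone]
    rw [List.concat_eq_append] at hl ⊢
    rcases R.mem_pos_or_neg_mem_pos (map_mem_roots_of_mem_weyl (wordProd_mem_weyl l)
      (R.simple_mem_roots i)) with hpos | hneg
    · obtain ⟨f, hf⟩ := exists_linearIsometry_of_mem_weyl (wordProd_mem_weyl l)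
      have hsplit : u - R.wordProd (l ++ [i]) u
          = (u - R.wordProd l u) + ⟪u, coroot (R.simple i)⟫ • R.wordProd l (R.simple i) := by
        rw [wordProd_append, wordProd_singleton, Function.comp_apply, ← hf, sRefl, map_sub,
          map_smul]
        abel
      rw [hsplit]
      exact R.add_mem_posCone (ih l.length (by simp [← hl]) l rfl)
        (R.smul_mem_posCone (hu i) (R.pos_subset_posCone hpos))
    · obtain ⟨l', hlen, hl'⟩ := exists_shorter_wordProd_eq hneg
      rw [← hl']
      exact ih l'.length (by simp at hl; omega) l' rfl

theorem sub_mem_posCone_of_mem_weyl (hu : R.IsDominant u) {w : V → V} (hw : w ∈ R.weyl) :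
    u - w u ∈ R.posCone := by
  obtain ⟨l, rfl⟩ := exists_wordProd_eq hw
  exact sub_wordProd_mem_posCone hu l

end Words

section Permutohedron

variable {R} {u v x : V}

lemma mem_perm_self (v : V) : v ∈ R.perm v := subset_convexHull ℝ _ (R.mem_orbit_self v)

lemma map_mem_perm {w : V → V} (hw : w ∈ R.weyl) (hx : x ∈ R.perm v) : w x ∈ R.perm v := by
  obtain ⟨f, rfl⟩ := exists_linearIsometry_of_mem_weyl hw
  have himage := f.toLinearMap.image_convexHull (R.orbit v)
  refine convexHull_mono ?_ (himage ▸ ⟨x, hx, rfl⟩ : f x ∈ convexHull ℝ (f '' R.orbit v))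
  rintro _ ⟨y, hy, rfl⟩
  exact map_mem_orbit hw hy

lemma exists_isDominant_map (x : V) : ∃ w ∈ R.weyl, R.IsDominant (w x) := by
  obtain ⟨_, ⟨w, hw, rfl⟩, hmax⟩ :=
    Set.exists_max_image (R.orbit x) R.height (R.orbit_finite x) ⟨x, R.mem_orbit_self x⟩
  refine ⟨w, hw, fun i => ?_⟩
  by_contra! h
  have := hmax _ (map_mem_orbit (sRefl_mem_weyl (R.simple_mem_roots i)) ⟨w, hw, rfl⟩)
  rw [R.height_sRefl_simple] at this
  linarith

lemma sub_mem_posCone_of_mem_perm (hv : R.IsDominant v) (hx : x ∈ R.perm v) :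
    v - x ∈ R.posCone := by
  refine convexHull_min (t := {x | v - x ∈ R.posCone}) ?_ ?_ hx
  · rintro _ ⟨w, hw, rfl⟩
    exact sub_mem_posCone_of_mem_weyl hv hw
  · intro y hy z hz a b ha hb hab
    have : v - (a • y + b • z) = a • (v - y) + b • (v - z) := calc
      _ = (a + b) • v - (a • y + b • z) := by rw [hab, one_smul]
      _ = _ := by module
    change v - _ ∈ R.posCone
    rw [this]
    exact R.add_mem_posCone (R.smul_mem_posCone ha hy) (R.smul_mem_posCone hb hz)

lemma mem_perm_of_sub_mem_posCone (hu : R.IsDominant u) (h : v - u ∈ R.posCone) :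
    u ∈ R.perm v := by
  have := R.basis.finiteDimensional_of_finite
  have := FiniteDimensional.complete ℝ V
  by_contra hu'
  obtain ⟨f, c, hfc, hcf⟩ := geometric_hahn_banach_closed_point (convex_convexHull ℝ _)
    ((R.orbit_finite v).isCompact_convexHull ℝ).isClosed hu'
  set x₀ := (InnerProductSpace.toDual ℝ V).symm f
  have hx₀ (z : V) : ⟪x₀, z⟫ = f z := InnerProductSpace.toDual_symm_apply
  obtain ⟨g, hg, hdom⟩ := R.exists_isDominant_map x₀
  obtain ⟨g', hg', hgg'⟩ := exists_rightInverse_of_mem_weyl hg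
  have hgu_le_u : ⟪g x₀, g u⟫ ≤ ⟪g x₀, u⟫ := by
    have := hdom.inner_nonneg (sub_mem_posCone_of_mem_weyl hu hg)
    rw [inner_sub_right] at this
    linarith
  have hu_le_v : ⟪g x₀, u⟫ ≤ ⟪g x₀, v⟫ := by
    have := hdom.inner_nonneg h
    rw [inner_sub_right] at this
    linarith
  obtain ⟨F, rfl⟩ := exists_linearIsometry_of_mem_weyl hg
  have : f u < c := calc
    f u = ⟪F x₀, F u⟫ := by rw [F.inner_map_map, hx₀]
    _ ≤ ⟪F x₀, v⟫ := hgu_le_u.trans hu_le_v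
    _ = f (g' v) := by conv_lhs => rw [← hgg' v, F.inner_map_map, hx₀]
    _ < c := hfc _ (subset_convexHull ℝ _ ⟨g', hg', rfl⟩)
  linarith

theorem perm_subset_perm_iff (hu : R.IsDominant u) (hv : R.IsDominant v) :
    R.perm u ⊆ R.perm v ↔ v - u ∈ R.posCone := by
  refine ⟨fun h => sub_mem_posCone_of_mem_perm hv (h (mem_perm_self u)), fun h => ?_⟩
  refine convexHull_min ?_ (convex_convexHull ℝ _)
  rintro _ ⟨w, hw, rfl⟩
  exact map_mem_perm hw (mem_perm_of_sub_mem_posCone hu h)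

end Permutohedron

section Discrete

variable {x lam mu : V}

lemma span_int_roots_le :
    Submodule.span ℤ R.roots ≤ Submodule.span ℤ (Set.range R.simple) := by
  have hpos : ∀ β ∈ R.pos, β ∈ Submodule.span ℤ (Set.range R.simple) := fun β hβ => by
    obtain ⟨c, rfl⟩ := R.pos_combo β hβ
    refine Submodule.sum_mem _ fun i _ => ?_
    rw [Nat.cast_smul_eq_nsmul]
    exact nsmul_mem (Submodule.subset_span (Set.mem_range_self i)) _
  refine Submodule.span_le.2 fun β hβ => ?_
  rcases R.mem_pos_or_neg_mem_pos hβ with h | h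
  · exact hpos β h
  · simpa using neg_mem (hpos _ h)

lemma sum_natCast_smul_simple_mem_span_roots (c : Fin R.n → ℕ) :
    ∑ i, (c i : ℝ) • R.simple i ∈ Submodule.span ℤ R.roots :=
  Submodule.sum_mem _ fun i _ => by
    rw [Nat.cast_smul_eq_nsmul]
    exact nsmul_mem (Submodule.subset_span (R.simple_mem_roots i)) _

lemma exists_natCoeffs_of_mem_posCone_of_mem_span (hx : x ∈ R.posCone)
    (hxQ : x ∈ Submodule.span ℤ R.roots) :
    ∃ c : Fin R.n → ℕ, x = ∑ i, (c i : ℝ) • R.simple i := by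
  obtain ⟨m, hm⟩ := (Submodule.mem_span_range_iff_exists_fun ℤ).1 (R.span_int_roots_le hxQ)
  simp_rw [← Int.cast_smul_eq_zsmul ℝ] at hm
  have hm_nonneg (i : Fin R.n) : 0 ≤ m i := by
    have := hx i
    rw [← hm, repr_sum_smul_simple] at this
    exact_mod_cast this
  refine ⟨fun i => (m i).toNat, hm.symm.trans (Finset.sum_congr rfl fun i _ => ?_)⟩
  congr 1
  exact_mod_cast (Int.toNat_of_nonneg (hm_nonneg i)).symm

theorem permQ_subset_permQ_iff (hlam : R.IsDominant lam) (hmu : R.IsDominant mu) :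
    R.permQ mu ⊆ R.permQ lam ↔ ∃ c : Fin R.n → ℕ, lam - mu = ∑ i, (c i : ℝ) • R.simple i := by
  constructor
  · intro h
    obtain ⟨hmu_perm, hmuQ⟩ := h (show mu ∈ R.permQ mu by simp [permQ, mem_perm_self])
    replace hmuQ : mu - lam ∈ Submodule.span ℤ R.roots := hmuQ
    exact R.exists_natCoeffs_of_mem_posCone_of_mem_span (sub_mem_posCone_of_mem_perm hlam hmu_perm)
      (by simpa using neg_mem hmuQ)
  · rintro ⟨c, hc⟩ x ⟨hx, hxQ : x - mu ∈ Submodule.span ℤ R.roots⟩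
    have hcQ := R.sum_natCast_smul_simple_mem_span_roots c
    rw [← hc] at hcQ
    refine ⟨(perm_subset_perm_iff hmu hlam).2 ?_ hx, by simpa using sub_mem hxQ hcQ⟩
    rw [hc]
    exact R.mem_posCone_iff.2 ⟨_, fun i => Nat.cast_nonneg _, rfl⟩

end Discrete

end RootSystemData

/-- Proposition 2.1: containment of permutohedra and of discrete permutohedra. -/
theorem statement0 (R : RootSystemData V) :
    (∀ u v : V, R.IsDominant u → R.IsDominant v →
      (R.perm u ⊆ R.perm v ↔
        ∃ c : Fin R.n → ℝ, (∀ i, 0 ≤ c i) ∧ v - u = ∑ i, c i • R.simple i)) ∧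
    (∀ lam mu : V, lam ∈ R.weightLattice → mu ∈ R.weightLattice →
      R.IsDominant lam → R.IsDominant mu →
      (R.permQ mu ⊆ R.permQ lam ↔
        ∃ c : Fin R.n → ℕ, lam - mu = ∑ i, (c i : ℝ) • R.simple i)) := by
  refine ⟨fun u v hu hv => ?_, fun lam mu _ _ hlam hmu => R.permQ_subset_permQ_iff hlam hmu⟩
  rw [R.perm_subset_perm_iff hu hv, R.mem_posCone_iff]
end
end

section
/- For every W-invariant function 𝐤:Φ→ℤ_{≥0}, the relations →_{sym,𝐤} and →_{tr,𝐤} on the weight lattice P are terminating: there is no infinite sequence λ₀→λ₁→λ₂→⋯ of firing moves. -/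
open RealInnerProductSpace Pointwise

noncomputable section

variable {V : Type*} [NormedAddCommGroup V] [InnerProductSpace ℝ V]

theorem inner_coroot_mul_inner_self {α : V} (hα : α ≠ 0) (v : V) :
    ⟪v, coroot α⟫ * ⟪α, α⟫ = 2 * ⟪v, α⟫ := by
  have hαα : ⟪α, α⟫ ≠ 0 := inner_self_ne_zero.mpr hα
  rw [coroot, real_inner_smul_right]
  field_simp

theorem norm_add_sub_sq_le_of_inner_coroot_add_one_le {lam ρ α : V} {k : ℝ} (hα : α ≠ 0)
    (hlam : ⟪lam, coroot α⟫ + 1 ≤ k) (hρ : k * ⟪α, α⟫ + 1 ≤ 2 * ⟪ρ, α⟫) :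
    ‖lam + α - ρ‖ ^ 2 ≤ ‖lam - ρ‖ ^ 2 - 1 := by
  have hαα : 0 < ⟪α, α⟫ := real_inner_self_pos.mpr hα
  have hlam' : 2 * ⟪lam, α⟫ ≤ (k - 1) * ⟪α, α⟫ := by
    rw [← inner_coroot_mul_inner_self hα]
    exact mul_le_mul_of_nonneg_right (by linarith) hαα.le
  have hexp : ‖lam + α - ρ‖ ^ 2 = ‖lam - ρ‖ ^ 2 + 2 * (⟪lam, α⟫ - ⟪ρ, α⟫) + ⟪α, α⟫ := by
    rw [add_sub_right_comm, norm_add_sq_real, inner_sub_left, real_inner_self_eq_norm_sq]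
  linarith

theorem exists_forall_le_inner_of_finite {S : Set V} (hS : S.Finite) {v : V}
    (hv : ∀ α ∈ S, 1 ≤ ⟪v, α⟫) (c : V → ℝ) : ∃ ρ : V, ∀ α ∈ S, c α ≤ ⟪ρ, α⟫ := by
  obtain ⟨M, hM⟩ := (hS.image c).bddAbove
  refine ⟨max M 0 • v, fun α hα => ?_⟩
  calc c α ≤ max M 0 * 1 := by simpa using (hM ⟨α, hα, rfl⟩).trans (le_max_left M 0)
    _ ≤ max M 0 * ⟪v, α⟫ := mul_le_mul_of_nonneg_left (hv α hα) (le_max_right M 0)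
    _ = ⟪max M 0 • v, α⟫ := (real_inner_smul_left _ _ _).symm

theorem not_forall_le_sub_one_of_nonneg {g : ℕ → ℝ} (hg : ∀ i, 0 ≤ g i) :
    ¬ ∀ i, g (i + 1) ≤ g i - 1 := by
  intro hdesc
  have hle : ∀ i : ℕ, g i ≤ g 0 - i := by
    intro i
    induction i with
    | zero => simp
    | succ m ih => push_cast; linarith [hdesc m]
  obtain ⟨N, hN⟩ := exists_nat_gt (g 0)
  linarith [hg N, hle N]

namespace RootSystemData

variable (R : RootSystemData V)

theorem ne_zero_of_mem_pos {α : V} (hα : α ∈ R.pos) : α ≠ 0 :=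
  fun h => R.roots_nonzero (h ▸ R.pos_subset hα)

/-- The witness is dual to the sum of the simple-root coordinates, so it pairs every root with its
height. -/
theorem exists_one_le_inner_of_mem_pos : ∃ v : V, ∀ α ∈ R.pos, 1 ≤ ⟪v, α⟫ := by
  let b : Module.Basis (Fin R.n) ℝ V := Module.Basis.mk R.simple_li R.simple_span.ge
  have : FiniteDimensional ℝ V := Module.Finite.of_basis b
  let v : V := (InnerProductSpace.toDual ℝ V).symm (LinearMap.toContinuousLinearMap b.sumCoords)
  have hv_simple : ∀ i, ⟪v, R.simple i⟫ = 1 := fun i => by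
    rw [InnerProductSpace.toDual_symm_apply, LinearMap.coe_toContinuousLinearMap',
      ← Module.Basis.mk_apply R.simple_li R.simple_span.ge, Module.Basis.sumCoords_self_apply]
  refine ⟨v, fun α hα => ?_⟩
  obtain ⟨c, rfl⟩ := R.pos_combo α hα
  have hc : ∑ i, c i ≠ 0 := by
    intro h0
    refine R.ne_zero_of_mem_pos hα (Finset.sum_eq_zero fun i _ => ?_)
    simp [Finset.sum_eq_zero_iff.mp h0 i (Finset.mem_univ i)]
  have hheight : ⟪v, ∑ i, (c i : ℝ) • R.simple i⟫ = ((∑ i, c i : ℕ) : ℝ) := by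
    simp [inner_sum, real_inner_smul_right, hv_simple]
  rw [hheight]
  exact_mod_cast Nat.one_le_iff_ne_zero.mpr hc

/-- The upper half of the firing condition, common to symmetric and truncated interval-firing. -/
def RaiseBelow (k : V → ℕ) (lam mu : V) : Prop :=
  ∃ α ∈ R.pos, mu = lam + α ∧ ⟪lam, coroot α⟫ + 1 ≤ (k α : ℝ)

theorem raiseBelow_of_symFire {k : V → ℕ} {lam mu : V} (h : R.symFire k lam mu) :
    R.RaiseBelow k lam mu :=
  let ⟨_, α, hα, hmu, _, hk⟩ := h
  ⟨α, hα, hmu, hk⟩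

theorem raiseBelow_of_trFire {k : V → ℕ} {lam mu : V} (h : R.trFire k lam mu) :
    R.RaiseBelow k lam mu :=
  let ⟨_, α, hα, hmu, _, hk⟩ := h
  ⟨α, hα, hmu, hk⟩

/-- With `ρ` chosen so that `2⟨ρ, α⟩ ≥ 𝐤(α)⟨α, α⟩ + 1` on all positive roots, every raise lowers
the potential `‖λ - ρ‖² ≥ 0` by at least one. -/
theorem not_exists_raiseBelow_seq (k : V → ℕ) :
    ¬ ∃ f : ℕ → V, ∀ i, R.RaiseBelow k (f i) (f (i + 1)) := by
  rintro ⟨f, hf⟩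
  obtain ⟨v, hv⟩ := R.exists_one_le_inner_of_mem_pos
  obtain ⟨ρ, hρ⟩ := exists_forall_le_inner_of_finite (R.roots_finite.subset R.pos_subset) hv
    fun α => ((k α : ℝ) * ⟪α, α⟫ + 1) / 2
  refine not_forall_le_sub_one_of_nonneg (g := fun i => ‖f i - ρ‖ ^ 2) (fun i => by positivity)
    fun i => ?_
  obtain ⟨α, hα, hstep, hk⟩ := hf i
  rw [hstep]
  exact norm_add_sub_sq_le_of_inner_coroot_add_one_le (R.ne_zero_of_mem_pos hα) hk
    (by linarith [hρ α hα])

end RootSystemData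

theorem statement1_general (R : RootSystemData V) (k : V → ℕ) :
    (¬ ∃ f : ℕ → V, ∀ i : ℕ, R.symFire k (f i) (f (i + 1))) ∧
    (¬ ∃ f : ℕ → V, ∀ i : ℕ, R.trFire k (f i) (f (i + 1))) :=
  ⟨fun ⟨f, hf⟩ => R.not_exists_raiseBelow_seq k ⟨f, fun i => R.raiseBelow_of_symFire (hf i)⟩,
    fun ⟨f, hf⟩ => R.not_exists_raiseBelow_seq k ⟨f, fun i => R.raiseBelow_of_trFire (hf i)⟩⟩

/-- Both symmetric and truncated interval-firing are terminating. -/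
theorem statement1 (R : RootSystemData V) (k : V → ℕ) (hk : R.IsWInvariant k) :
    (¬ ∃ f : ℕ → V, ∀ i : ℕ, R.symFire k (f i) (f (i + 1))) ∧
    (¬ ∃ f : ℕ → V, ∀ i : ℕ, R.trFire k (f i) (f (i + 1))) :=
  statement1_general R k
end
end
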